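/- Let (θ, x) ↦ f_θ(x) be a jointly smooth family of vector fields on ℝ^p, let θ* ∈ Θ, and let j ∈ {1,…,d}. Assume: (i) a Wasserstein score function Φ_{θ*,j} exists; (ii) E_θ[A_θ f_θ] = 0 for θ in a neighborhood of θ* and the θ_j-derivative of θ ↦ ∫ q_θ (A_θ f_θ) dx at θ* may be taken under the integral sign; (iii) E_{θ*}[A_{θ*}(∂_{θ_j} f_θ|_{θ=θ*})] = 0; (iv) all integrands below are q_{θ*}-integrable. Then E_{θ*}[⟨f_{θ*}, ∇_x ∂_{θ_j} log q_{θ*}⟩] = E_{θ*}[(A_{θ*} f_{θ*}) · (A_{θ*}(∇_x Φ_{θ*,j}))]. -/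

import Mathlib

open MeasureTheory Real Filter

/-- Partial derivative in the `i`-th coordinate. -/
noncomputable def pdv {n : ℕ} (i : Fin n) (f : (Fin n → ℝ) → ℝ) (x : Fin n → ℝ) : ℝ :=
  deriv (fun t => f (Function.update x i t)) (x i)

/-- Gradient of a scalar function on ℝ^n. -/
noncomputable def gradv {n : ℕ} (f : (Fin n → ℝ) → ℝ) (x : Fin n → ℝ) : Fin n → ℝ :=
  fun i => pdv i f x

/-- Divergence of a vector field on ℝ^n. -/
noncomputable def divv {n : ℕ} (f : (Fin n → ℝ) → (Fin n → ℝ)) (x : Fin n → ℝ) : ℝ :=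
  ∑ i, pdv i (fun y => f y i) x

/-- Divergence-based Stein operator `A_q f = div(q f) / q`. -/
noncomputable def stein {n : ℕ} (q : (Fin n → ℝ) → ℝ) (f : (Fin n → ℝ) → (Fin n → ℝ))
    (x : Fin n → ℝ) : ℝ :=
  divv (fun y i => q y * f y i) x / q x

/-- Gradient (in x) of the `j`-th Fisher score function `∂_{θ_j} log q_θ`. -/
noncomputable def scoreGrad {d p : ℕ} (q : (Fin d → ℝ) → (Fin p → ℝ) → ℝ)
    (θ : Fin d → ℝ) (j : Fin d) (x : Fin p → ℝ) : Fin p → ℝ :=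
  gradv (fun z => pdv j (fun θ' => Real.log (q θ' z)) θ) x


section Helpers

lemma hasDerivAt_pdv' {n : ℕ} {f : (Fin n → ℝ) → ℝ} {x : Fin n → ℝ}
    (hf : DifferentiableAt ℝ f x) (i : Fin n) :
    HasDerivAt (fun t => f (Function.update x i t))
      (fderiv ℝ f x (Pi.single i 1)) (x i) := by
  have hF : HasFDerivAt f (fderiv ℝ f x) (Function.update x i (x i)) := by
    rw [Function.update_eq_self]; exact hf.hasFDerivAt
  exact hF.comp_hasDerivAt (x i) (hasDerivAt_update x i (x i))

lemma hasDerivAt_pdv_fst {d p : ℕ} {H : (Fin d → ℝ) × (Fin p → ℝ) → ℝ}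
    {θ : Fin d → ℝ} {x : Fin p → ℝ} (hH : DifferentiableAt ℝ H (θ, x)) (j : Fin d) :
    HasDerivAt (fun t => H (Function.update θ j t, x))
      (fderiv ℝ H (θ, x) (Pi.single j 1, 0)) (θ j) := by
  have hg : HasDerivAt (fun t => (Function.update θ j t, x))
      ((Pi.single j 1 : Fin d → ℝ), (0 : Fin p → ℝ)) (θ j) :=
    (hasDerivAt_update θ j (θ j)).prodMk (hasDerivAt_const (θ j) x)
  have hF : HasFDerivAt H (fderiv ℝ H (θ, x)) (Function.update θ j (θ j), x) := by
    rw [Function.update_eq_self]; exact hH.hasFDerivAt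
  exact hF.comp_hasDerivAt (θ j) hg

lemma hasDerivAt_pdv_snd {d p : ℕ} {H : (Fin d → ℝ) × (Fin p → ℝ) → ℝ}
    {θ : Fin d → ℝ} {x : Fin p → ℝ} (hH : DifferentiableAt ℝ H (θ, x)) (i : Fin p) :
    HasDerivAt (fun t => H (θ, Function.update x i t))
      (fderiv ℝ H (θ, x) (0, Pi.single i 1)) (x i) := by
  have hg : HasDerivAt (fun t => (θ, Function.update x i t))
      ((0 : Fin d → ℝ), (Pi.single i 1 : Fin p → ℝ)) (x i) :=
    (hasDerivAt_const (x i) θ).prodMk (hasDerivAt_update x i (x i))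
  have hF : HasFDerivAt H (fderiv ℝ H (θ, x)) (θ, Function.update x i (x i)) := by
    rw [Function.update_eq_self]; exact hH.hasFDerivAt
  exact hF.comp_hasDerivAt (x i) hg

lemma contDiff_fderiv_apply {G : Type*} [NormedAddCommGroup G] [NormedSpace ℝ G]
    {H : G → ℝ} (hH : ContDiff ℝ (⊤ : ℕ∞) H) (v : G) :
    ContDiff ℝ (⊤ : ℕ∞) (fun z => fderiv ℝ H z v) :=
  (hH.fderiv_right (by simp)).clm_apply contDiff_const

lemma clairaut {G : Type*} [NormedAddCommGroup G] [NormedSpace ℝ G]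
    {H : G → ℝ} (hH : ContDiff ℝ (⊤ : ℕ∞) H) (z v w : G) :
    fderiv ℝ (fun y => fderiv ℝ H y v) z w
      = fderiv ℝ (fun y => fderiv ℝ H y w) z v := by
  have hs : IsSymmSndFDerivAt ℝ H z :=
    hH.contDiffAt.isSymmSndFDerivAt (by simp only [minSmoothness_of_isRCLikeNormedField]; exact WithTop.coe_le_coe.mpr (le_top : (2 : ℕ∞) ≤ ⊤))
  have hd : DifferentiableAt ℝ (fderiv ℝ H) z :=
    ((hH.fderiv_right (m := (⊤ : ℕ∞)) (by simp)).differentiable (by simp)) z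
  have e : ∀ u w' : G, fderiv ℝ (fun y => fderiv ℝ H y u) z w'
      = fderiv ℝ (fderiv ℝ H) z w' u := by
    intro u w'
    rw [fderiv_clm_apply hd (differentiableAt_const u)]
    simp
  rw [e, e]
  exact hs w v

lemma stein_eq {n : ℕ} {q : (Fin n → ℝ) → ℝ} {f : (Fin n → ℝ) → (Fin n → ℝ)} {x : Fin n → ℝ}
    (hq : DifferentiableAt ℝ q x) (hq0 : q x ≠ 0)
    (hf : ∀ i, DifferentiableAt ℝ (fun y => f y i) x) :
    stein q f x = ∑ i, (pdv i (fun y => f y i) x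
      + f x i * pdv i (fun y => Real.log (q y)) x) := by
  have h1 : ∀ i : Fin n, pdv i (fun y => q y * f y i) x
      = fderiv ℝ q x (Pi.single i 1) * f x i
        + q x * fderiv ℝ (fun y => f y i) x (Pi.single i 1) := by
    intro i
    have := ((hasDerivAt_pdv' hq i).fun_mul (hasDerivAt_pdv' (hf i) i)).deriv
    simpa [pdv, Function.update_eq_self] using this
  have h2 : ∀ i : Fin n, pdv i (fun y => Real.log (q y)) x
      = fderiv ℝ q x (Pi.single i 1) / q x := by
    intro i
    have hlog := ((hasDerivAt_pdv' hq i).log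
      (by rwa [Function.update_eq_self])).deriv
    simpa [pdv, Function.update_eq_self] using hlog
  have h3 : ∀ i : Fin n, pdv i (fun y => f y i) x
      = fderiv ℝ (fun y => f y i) x (Pi.single i 1) :=
    fun i => (hasDerivAt_pdv' (hf i) i).deriv
  unfold stein divv
  rw [Finset.sum_div]
  refine Finset.sum_congr rfl fun i _ => ?_
  rw [h1 i, h2 i, h3 i]
  field_simp
  ring

end Helpers


lemma PW {d p : ℕ} (q : (Fin d → ℝ) → (Fin p → ℝ) → ℝ) (hpos : ∀ θ x, 0 < q θ x)
    (hsmooth : ContDiff ℝ (⊤ : ℕ∞) (fun pr : (Fin d → ℝ) × (Fin p → ℝ) => q pr.1 pr.2))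
    (f : (Fin d → ℝ) → (Fin p → ℝ) → (Fin p → ℝ))
    (hf : ContDiff ℝ (⊤ : ℕ∞) (fun pr : (Fin d → ℝ) × (Fin p → ℝ) => f pr.1 pr.2))
    (θs : Fin d → ℝ) (j : Fin d) (x : Fin p → ℝ) :
    pdv j (fun θ => q θ x * stein (q θ) (f θ) x) θs
      = q θs x * (stein (q θs) (f θs) x * pdv j (fun θ => Real.log (q θ x)) θs)
      + q θs x * stein (q θs) (fun y i => pdv j (fun θ' => f θ' y i) θs) x
      + q θs x * ∑ i, f θs x i * scoreGrad q θs j x i := by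
  classical
  set Q : (Fin d → ℝ) × (Fin p → ℝ) → ℝ := fun pr => q pr.1 pr.2 with hQdef
  set G : (Fin d → ℝ) × (Fin p → ℝ) → ℝ := fun pr => Real.log (q pr.1 pr.2) with hGdef
  have hQ : ContDiff ℝ (⊤ : ℕ∞) Q := hsmooth
  have hG : ContDiff ℝ (⊤ : ℕ∞) G := hsmooth.log (fun pr => (hpos _ _).ne')
  have hFc : ∀ i : Fin p,
      ContDiff ℝ (⊤ : ℕ∞) (fun pr : (Fin d → ℝ) × (Fin p → ℝ) => f pr.1 pr.2 i) := fun i =>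
    (ContinuousLinearMap.proj (R := ℝ) (φ := fun _ : Fin p => ℝ) i).contDiff.comp hf
  have hQd : ∀ pr, DifferentiableAt ℝ Q pr := fun pr => (hQ.differentiable (by simp)) pr
  have hGd : ∀ pr, DifferentiableAt ℝ G pr := fun pr => (hG.differentiable (by simp)) pr
  have hFcd : ∀ (i : Fin p) pr,
      DifferentiableAt ℝ (fun pr : (Fin d → ℝ) × (Fin p → ℝ) => f pr.1 pr.2 i) pr :=
    fun i pr => ((hFc i).differentiable (by simp)) pr
  set ej : (Fin d → ℝ) × (Fin p → ℝ) := (Pi.single j 1, 0) with hejdef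
  have hDjG : ContDiff ℝ (⊤ : ℕ∞) (fun pr => fderiv ℝ G pr ej) := contDiff_fderiv_apply hG ej
  have hDjF : ∀ i : Fin p, ContDiff ℝ (⊤ : ℕ∞)
      (fun pr => fderiv ℝ (fun pr' : (Fin d → ℝ) × (Fin p → ℝ) => f pr'.1 pr'.2 i) pr ej) :=
    fun i => contDiff_fderiv_apply (hFc i) ej
  have hDxG : ∀ i : Fin p, ContDiff ℝ (⊤ : ℕ∞)
      (fun pr => fderiv ℝ G pr ((0 : Fin d → ℝ), Pi.single i 1)) :=
    fun i => contDiff_fderiv_apply hG _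
  have hDxF : ∀ i : Fin p, ContDiff ℝ (⊤ : ℕ∞)
      (fun pr => fderiv ℝ (fun pr' : (Fin d → ℝ) × (Fin p → ℝ) => f pr'.1 pr'.2 i) pr
        ((0 : Fin d → ℝ), Pi.single i 1)) :=
    fun i => contDiff_fderiv_apply (hFc i) _
  set SS : (Fin d → ℝ) × (Fin p → ℝ) → ℝ := fun pr =>
    ∑ i, (fderiv ℝ (fun pr' : (Fin d → ℝ) × (Fin p → ℝ) => f pr'.1 pr'.2 i) pr
            ((0 : Fin d → ℝ), Pi.single i 1)
      + f pr.1 pr.2 i * fderiv ℝ G pr ((0 : Fin d → ℝ), Pi.single i 1)) with hSSdef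
  have c1 : ∀ (θ : Fin d → ℝ) (y : Fin p → ℝ), stein (q θ) (f θ) y = SS (θ, y) := by
    intro θ y
    have hqθ : DifferentiableAt ℝ (q θ) y :=
      (hQd (θ, y)).comp y ((differentiableAt_const θ).prodMk differentiableAt_id)
    have hfθ : ∀ i, DifferentiableAt ℝ (fun z => f θ z i) y := fun i =>
      (hFcd i (θ, y)).comp y ((differentiableAt_const θ).prodMk differentiableAt_id)
    rw [stein_eq hqθ (hpos θ y).ne' hfθ]
    refine Finset.sum_congr rfl fun i _ => ?_
    have e1 : pdv i (fun z => f θ z i) y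
        = fderiv ℝ (fun pr' : (Fin d → ℝ) × (Fin p → ℝ) => f pr'.1 pr'.2 i) (θ, y)
            ((0 : Fin d → ℝ), Pi.single i 1) :=
      (hasDerivAt_pdv_snd (hFcd i (θ, y)) i).deriv
    have e2 : pdv i (fun z => Real.log (q θ z)) y
        = fderiv ℝ G (θ, y) ((0 : Fin d → ℝ), Pi.single i 1) :=
      (hasDerivAt_pdv_snd (hGd (θ, y)) i).deriv
    rw [e1, e2]
  have hGj : pdv j (fun θ => Real.log (q θ x)) θs = fderiv ℝ G (θs, x) ej :=
    (hasDerivAt_pdv_fst (hGd (θs, x)) j).deriv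
  have hQj : fderiv ℝ Q (θs, x) ej = q θs x * fderiv ℝ G (θs, x) ej := by
    have hlog : HasFDerivAt G ((Q (θs, x))⁻¹ • fderiv ℝ Q (θs, x)) (θs, x) :=
      (hQd (θs, x)).hasFDerivAt.log (hpos θs x).ne'
    rw [hlog.fderiv]
    simp only [ContinuousLinearMap.coe_smul', Pi.smul_apply, smul_eq_mul]
    have hQval : Q (θs, x) = q θs x := rfl
    rw [hQval, ← mul_assoc, mul_inv_cancel₀ (hpos θs x).ne', one_mul]
  have hSSder : HasDerivAt (fun t => SS (Function.update θs j t, x))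
      (∑ i, (fderiv ℝ (fun pr => fderiv ℝ
              (fun pr' : (Fin d → ℝ) × (Fin p → ℝ) => f pr'.1 pr'.2 i) pr
              ((0 : Fin d → ℝ), Pi.single i 1)) (θs, x) ej
        + (fderiv ℝ (fun pr' : (Fin d → ℝ) × (Fin p → ℝ) => f pr'.1 pr'.2 i) (θs, x) ej
              * fderiv ℝ G (θs, x) ((0 : Fin d → ℝ), Pi.single i 1)
          + f θs x i * fderiv ℝ (fun pr => fderiv ℝ G pr
              ((0 : Fin d → ℝ), Pi.single i 1)) (θs, x) ej)))
      (θs j) := by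
    refine HasDerivAt.fun_sum fun i _ => ?_
    have hA := hasDerivAt_pdv_fst (((hDxF i).differentiable (by simp)) (θs, x)) j
    have hB := hasDerivAt_pdv_fst (hFcd i (θs, x)) j
    have hC := hasDerivAt_pdv_fst (((hDxG i).differentiable (by simp)) (θs, x)) j
    have := hA.fun_add (hB.fun_mul hC)
    simpa [Function.update_eq_self] using this
  have hLHS : pdv j (fun θ => q θ x * stein (q θ) (f θ) x) θs
      = fderiv ℝ Q (θs, x) ej * SS (θs, x) + q θs x *
        (∑ i, (fderiv ℝ (fun pr => fderiv ℝ
              (fun pr' : (Fin d → ℝ) × (Fin p → ℝ) => f pr'.1 pr'.2 i) pr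
              ((0 : Fin d → ℝ), Pi.single i 1)) (θs, x) ej
        + (fderiv ℝ (fun pr' : (Fin d → ℝ) × (Fin p → ℝ) => f pr'.1 pr'.2 i) (θs, x) ej
              * fderiv ℝ G (θs, x) ((0 : Fin d → ℝ), Pi.single i 1)
          + f θs x i * fderiv ℝ (fun pr => fderiv ℝ G pr
              ((0 : Fin d → ℝ), Pi.single i 1)) (θs, x) ej))) := by
    have hQder : HasDerivAt (fun t => Q (Function.update θs j t, x))
        (fderiv ℝ Q (θs, x) ej) (θs j) := hasDerivAt_pdv_fst (hQd (θs, x)) j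
    have hmul := hQder.fun_mul hSSder
    have hfn : (fun t => q (Function.update θs j t) x
          * stein (q (Function.update θs j t)) (f (Function.update θs j t)) x)
        = fun t => Q (Function.update θs j t, x) * SS (Function.update θs j t, x) := by
      funext t
      rw [c1]
    show deriv (fun t => q (Function.update θs j t) x
        * stein (q (Function.update θs j t)) (f (Function.update θs j t)) x) (θs j) = _
    rw [hfn, hmul.deriv]
    simp [Function.update_eq_self]
    exact Or.inl rfl
  have hc1 : ∀ i : Fin p, fderiv ℝ (fun pr => fderiv ℝ
        (fun pr' : (Fin d → ℝ) × (Fin p → ℝ) => f pr'.1 pr'.2 i) pr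
        ((0 : Fin d → ℝ), Pi.single i 1)) (θs, x) ej
      = fderiv ℝ (fun pr => fderiv ℝ
        (fun pr' : (Fin d → ℝ) × (Fin p → ℝ) => f pr'.1 pr'.2 i) pr ej) (θs, x)
        ((0 : Fin d → ℝ), Pi.single i 1) :=
    fun i => clairaut (hFc i) _ _ _
  have hc2 : ∀ i : Fin p, fderiv ℝ (fun pr => fderiv ℝ G pr
        ((0 : Fin d → ℝ), Pi.single i 1)) (θs, x) ej
      = fderiv ℝ (fun pr => fderiv ℝ G pr ej) (θs, x) ((0 : Fin d → ℝ), Pi.single i 1) :=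
    fun i => clairaut hG _ _ _
  have hterm2 : stein (q θs) (fun y i => pdv j (fun θ' => f θ' y i) θs) x
      = ∑ i, (fderiv ℝ (fun pr => fderiv ℝ
            (fun pr' : (Fin d → ℝ) × (Fin p → ℝ) => f pr'.1 pr'.2 i) pr ej) (θs, x)
            ((0 : Fin d → ℝ), Pi.single i 1)
          + fderiv ℝ (fun pr' : (Fin d → ℝ) × (Fin p → ℝ) => f pr'.1 pr'.2 i) (θs, x) ej
            * fderiv ℝ G (θs, x) ((0 : Fin d → ℝ), Pi.single i 1)) := by
    have hgeq : (fun (y : Fin p → ℝ) (i : Fin p) => pdv j (fun θ' => f θ' y i) θs)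
        = fun y i => fderiv ℝ (fun pr' : (Fin d → ℝ) × (Fin p → ℝ) => f pr'.1 pr'.2 i)
            (θs, y) ej := by
      funext y i
      exact (hasDerivAt_pdv_fst (hFcd i (θs, y)) j).deriv
    rw [hgeq]
    have hqθ : DifferentiableAt ℝ (q θs) x :=
      (hQd (θs, x)).comp x ((differentiableAt_const θs).prodMk differentiableAt_id)
    have hfd : ∀ i, DifferentiableAt ℝ (fun y =>
        fderiv ℝ (fun pr' : (Fin d → ℝ) × (Fin p → ℝ) => f pr'.1 pr'.2 i) (θs, y) ej) x :=
      fun i => (((hDjF i).differentiable (by simp)) (θs, x)).comp x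
        ((differentiableAt_const θs).prodMk differentiableAt_id)
    rw [stein_eq hqθ (hpos θs x).ne' hfd]
    refine Finset.sum_congr rfl fun i _ => ?_
    have e1 : pdv i (fun y =>
          fderiv ℝ (fun pr' : (Fin d → ℝ) × (Fin p → ℝ) => f pr'.1 pr'.2 i) (θs, y) ej) x
        = fderiv ℝ (fun pr => fderiv ℝ
            (fun pr' : (Fin d → ℝ) × (Fin p → ℝ) => f pr'.1 pr'.2 i) pr ej) (θs, x)
            ((0 : Fin d → ℝ), Pi.single i 1) :=
      (hasDerivAt_pdv_snd (((hDjF i).differentiable (by simp)) (θs, x)) i).deriv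
    have e2 : pdv i (fun z => Real.log (q θs z)) x
        = fderiv ℝ G (θs, x) ((0 : Fin d → ℝ), Pi.single i 1) :=
      (hasDerivAt_pdv_snd (hGd (θs, x)) i).deriv
    rw [e1, e2]
  have hscore : ∀ i : Fin p, scoreGrad q θs j x i
      = fderiv ℝ (fun pr => fderiv ℝ G pr ej) (θs, x) ((0 : Fin d → ℝ), Pi.single i 1) := by
    intro i
    show pdv i (fun z => pdv j (fun θ' => Real.log (q θ' z)) θs) x = _
    have hfn2 : (fun z => pdv j (fun θ' => Real.log (q θ' z)) θs)
        = fun z => fderiv ℝ G (θs, z) ej :=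
      funext fun z => (hasDerivAt_pdv_fst (hGd (θs, z)) j).deriv
    rw [hfn2]
    exact (hasDerivAt_pdv_snd ((hDjG.differentiable (by simp)) (θs, x)) i).deriv
  have hsum3 : (∑ i, f θs x i * scoreGrad q θs j x i)
      = ∑ i, f θs x i * fderiv ℝ (fun pr => fderiv ℝ G pr ej) (θs, x)
          ((0 : Fin d → ℝ), Pi.single i 1) :=
    Finset.sum_congr rfl fun i _ => by rw [hscore i]
  rw [hLHS, hQj, hGj, hterm2, hsum3, c1 θs x]
  have hsplit : (∑ i, (fderiv ℝ (fun pr => fderiv ℝ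
              (fun pr' : (Fin d → ℝ) × (Fin p → ℝ) => f pr'.1 pr'.2 i) pr
              ((0 : Fin d → ℝ), Pi.single i 1)) (θs, x) ej
        + (fderiv ℝ (fun pr' : (Fin d → ℝ) × (Fin p → ℝ) => f pr'.1 pr'.2 i) (θs, x) ej
              * fderiv ℝ G (θs, x) ((0 : Fin d → ℝ), Pi.single i 1)
          + f θs x i * fderiv ℝ (fun pr => fderiv ℝ G pr
              ((0 : Fin d → ℝ), Pi.single i 1)) (θs, x) ej)))
      = (∑ i, (fderiv ℝ (fun pr => fderiv ℝ
            (fun pr' : (Fin d → ℝ) × (Fin p → ℝ) => f pr'.1 pr'.2 i) pr ej) (θs, x)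
            ((0 : Fin d → ℝ), Pi.single i 1)
          + fderiv ℝ (fun pr' : (Fin d → ℝ) × (Fin p → ℝ) => f pr'.1 pr'.2 i) (θs, x) ej
            * fderiv ℝ G (θs, x) ((0 : Fin d → ℝ), Pi.single i 1)))
        + ∑ i, f θs x i * fderiv ℝ (fun pr => fderiv ℝ G pr ej) (θs, x)
            ((0 : Fin d → ℝ), Pi.single i 1) := by
    rw [← Finset.sum_add_distrib]
    refine Finset.sum_congr rfl fun i _ => ?_
    rw [hc1 i, hc2 i]
    ring
  rw [hsplit]
  ring

/-- connection of the two inner products through the Wasserstein score function: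
`E_{θ*}[⟨f_{θ*}, ∇ₓ∂_{θⱼ} log q_{θ*}⟩] = E_{θ*}[(A_{θ*} f_{θ*}) (A_{θ*}(∇ₓ Φ_{θ*,j}))]`. -/
theorem stmt4 {d p : ℕ} (Θ : Set (Fin d → ℝ)) (hΘ : IsOpen Θ)
    (q : (Fin d → ℝ) → (Fin p → ℝ) → ℝ)
    (hpos : ∀ θ x, 0 < q θ x)
    (hsmooth : ContDiff ℝ (⊤ : ℕ∞) (fun pr : (Fin d → ℝ) × (Fin p → ℝ) => q pr.1 pr.2))
    (f : (Fin d → ℝ) → (Fin p → ℝ) → (Fin p → ℝ))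
    (hf : ContDiff ℝ (⊤ : ℕ∞) (fun pr : (Fin d → ℝ) × (Fin p → ℝ) => f pr.1 pr.2))
    (θs : Fin d → ℝ) (hθs : θs ∈ Θ) (j : Fin d)
    -- (i) a Wasserstein score function Φ_{θ*,j} exists
    (Φ : (Fin p → ℝ) → ℝ) (hΦsm : ContDiff ℝ (⊤ : ℕ∞) Φ)
    (hΦpde : ∀ x, stein (q θs) (fun y => gradv Φ y) x
        = - pdv j (fun θ => Real.log (q θ x)) θs)
    (hΦ0 : ∫ x, q θs x * Φ x = 0)
    -- (ii) `E_θ[A_θ f_θ] = 0` near θ* and differentiation under the integral sign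
    (hmean : ∀ᶠ θ in nhds θs, ∫ x, q θ x * stein (q θ) (f θ) x = 0)
    (hswap : pdv j (fun θ => ∫ x, q θ x * stein (q θ) (f θ) x) θs
        = ∫ x, pdv j (fun θ => q θ x * stein (q θ) (f θ) x) θs)
    -- (iii) `E_{θ*}[A_{θ*}(∂_{θⱼ} f_θ |_{θ*})] = 0`
    (h0 : ∫ x, q θs x * stein (q θs) (fun y i => pdv j (fun θ' => f θ' y i) θs) x = 0)
    -- (iv) integrability of all the relevant integrands
    (hint1 : Integrable (fun x =>
        q θs x * ∑ i, f θs x i * scoreGrad q θs j x i))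
    (hint2 : Integrable (fun x =>
        q θs x * (stein (q θs) (f θs) x * stein (q θs) (fun y => gradv Φ y) x)))
    (hint3 : Integrable (fun x =>
        q θs x * (stein (q θs) (f θs) x * pdv j (fun θ => Real.log (q θ x)) θs)))
    (hint4 : Integrable (fun x => q θs x * pdv j (fun θ => stein (q θ) (f θ) x) θs))
    (hint5 : Integrable (fun x => pdv j (fun θ => q θ x * stein (q θ) (f θ) x) θs))
    (hint6 : Integrable (fun x =>
        q θs x * stein (q θs) (fun y i => pdv j (fun θ' => f θ' y i) θs) x)) :
    ∫ x, q θs x * ∑ i, f θs x i * scoreGrad q θs j x i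
      = ∫ x, q θs x * (stein (q θs) (f θs) x * stein (q θs) (fun y => gradv Φ y) x) := by
  classical
  -- Step A: the θ-derivative of the (locally zero) mean of the Stein operator vanishes
  have hpdv0 : pdv j (fun θ => ∫ x, q θ x * stein (q θ) (f θ) x) θs = 0 := by
    have htend : Filter.Tendsto (fun t => Function.update θs j t) (nhds (θs j)) (nhds θs) := by
      have h := (hasDerivAt_update θs j (θs j)).continuousAt
      rwa [ContinuousAt, Function.update_eq_self] at h
    have hev : (fun t => ∫ x, q (Function.update θs j t) x
          * stein (q (Function.update θs j t)) (f (Function.update θs j t)) x)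
        =ᶠ[nhds (θs j)] (fun _ => (0 : ℝ)) := by
      filter_upwards [htend.eventually hmean] with t ht using ht
    show deriv (fun t => ∫ x, q (Function.update θs j t) x
        * stein (q (Function.update θs j t)) (f (Function.update θs j t)) x) (θs j) = 0
    rw [hev.deriv_eq]
    simp
  have hint0 : ∫ x, pdv j (fun θ => q θ x * stein (q θ) (f θ) x) θs = 0 := by
    rw [← hswap]; exact hpdv0
  -- split the integrand using the pointwise identity
  have hfn : (fun x => pdv j (fun θ => q θ x * stein (q θ) (f θ) x) θs)
      = fun x => q θs x * (stein (q θs) (f θs) x * pdv j (fun θ => Real.log (q θ x)) θs)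
        + (q θs x * stein (q θs) (fun y i => pdv j (fun θ' => f θ' y i) θs) x
          + q θs x * ∑ i, f θs x i * scoreGrad q θs j x i) := by
    funext x
    rw [PW q hpos hsmooth f hf θs j x]
    ring
  have hsum : (∫ x, q θs x * (stein (q θs) (f θs) x
          * pdv j (fun θ => Real.log (q θ x)) θs))
        + ((∫ x, q θs x * stein (q θs) (fun y i => pdv j (fun θ' => f θ' y i) θs) x)
          + (∫ x, q θs x * ∑ i, f θs x i * scoreGrad q θs j x i)) = 0 := by
    have hI23 : Integrable (fun x =>
        q θs x * stein (q θs) (fun y i => pdv j (fun θ' => f θ' y i) θs) x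
          + q θs x * ∑ i, f θs x i * scoreGrad q θs j x i) := hint6.add hint1
    have h1 : (∫ x, (q θs x * (stein (q θs) (f θs) x
          * pdv j (fun θ => Real.log (q θ x)) θs)
        + (q θs x * stein (q θs) (fun y i => pdv j (fun θ' => f θ' y i) θs) x
          + q θs x * ∑ i, f θs x i * scoreGrad q θs j x i))) = 0 := by
      rw [← hfn]; exact hint0
    rw [integral_add hint3 hI23, integral_add hint6 hint1] at h1
    exact h1
  -- rewrite the right-hand side via the PDE for the Wasserstein score function
  have hrhs : (∫ x, q θs x * (stein (q θs) (f θs) x * stein (q θs) (fun y => gradv Φ y) x))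
      = - ∫ x, q θs x * (stein (q θs) (f θs) x
          * pdv j (fun θ => Real.log (q θ x)) θs) := by
    rw [← integral_neg]
    congr 1
    funext x
    rw [hΦpde x]
    ring
  rw [hrhs]
  rw [h0] at hsum
  linarith [hsum]
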